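/- arXiv:2502.12179 — 2 statements merged into one kernel-verified Lean document; each statement's English description precedes it below -/
import Mathlib

section
/- Let x be an R^m-valued random vector with random support S, and let L ∈ R^{m×m}. Suppose that for each support set S in the support of the distribution of S and each j, the conditional probability that L_{j,S}·x_S = 0 given S is 0 whenever L_{j,S} ≠ 0, and is 1 when L_{j,S} = 0 (where L_{j,S} is the row j restricted to columns in S). Then E[‖Lx‖₀] = E[Σ_j 1(S ∩ N_j ≠ ∅)], where N_j := {i : L_{j,i} ≠ 0}. -/
open MeasureTheory ProbabilityTheory
open scoped Classical

theorem stmt8 {m : ℕ} {Ω : Type*} [MeasureSpace Ω]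
    [IsProbabilityMeasure (volume : Measure Ω)]
    (x : Ω → Fin m → ℝ) (hx : Measurable x)
    (L : Matrix (Fin m) (Fin m) ℝ)
    -- the random support of x
    (supp : Ω → Finset (Fin m))
    (hsupp : ∀ ω, supp ω = Finset.univ.filter (fun j => x ω j ≠ 0))
    -- conditional distribution assumptions given the support S
    (hcond0 : ∀ S : Finset (Fin m), ∀ j : Fin m,
      (volume {ω | supp ω = S}) ≠ 0 → (∃ i ∈ S, L j i ≠ 0) →
      (volume[|{ω | supp ω = S}]) {ω | ∑ i ∈ S, L j i * x ω i = 0} = 0)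
    (hcond1 : ∀ S : Finset (Fin m), ∀ j : Fin m,
      (volume {ω | supp ω = S}) ≠ 0 → (∀ i ∈ S, L j i = 0) →
      (volume[|{ω | supp ω = S}]) {ω | ∑ i ∈ S, L j i * x ω i = 0} = 1) :
    ∫ ω, (∑ j, if L.mulVec (x ω) j ≠ 0 then (1 : ℝ) else 0) =
      ∫ ω, (∑ j : Fin m,
        if (supp ω ∩ Finset.univ.filter (fun i => L j i ≠ 0)).Nonempty
        then (1 : ℝ) else 0) := by
  have hxi : ∀ i : Fin m, Measurable fun ω => x ω i :=
    fun i => (measurable_pi_apply i).comp hx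
  -- measurability of {supp = S}
  have hmS : ∀ S : Finset (Fin m), MeasurableSet {ω | supp ω = S} := by
    intro S
    have hEq : {ω | supp ω = S} = ⋂ i : Fin m, {ω | x ω i ≠ 0 ↔ i ∈ S} := by
      ext ω
      simp only [Set.mem_setOf_eq, Set.mem_iInter, hsupp]
      constructor
      · intro h i; rw [← h]; simp
      · intro h; ext i; simp [h i]
    rw [hEq]
    refine MeasurableSet.iInter fun i => ?_
    by_cases hiS : i ∈ S
    · have : {ω | x ω i ≠ 0 ↔ i ∈ S} = {ω | x ω i ≠ 0} := by
        ext ω; simp [hiS]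
      rw [this]; exact ((hxi i) (measurableSet_singleton 0)).compl
    · have : {ω | x ω i ≠ 0 ↔ i ∈ S} = {ω | x ω i = 0} := by
        ext ω; simp [hiS]
      rw [this]; exact (hxi i) (measurableSet_singleton 0)
  -- measurability of the two families of events
  have hmA : ∀ j : Fin m, MeasurableSet {ω | L.mulVec (x ω) j ≠ 0} := by
    intro j
    have hmeas : Measurable fun ω => L.mulVec (x ω) j := by
      simp only [Matrix.mulVec, dotProduct]
      exact Finset.measurable_sum _ fun i _ => (hxi i).const_mul _
    exact (hmeas (measurableSet_singleton 0)).compl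
  have hmB : ∀ j : Fin m,
      MeasurableSet {ω | (supp ω ∩ Finset.univ.filter (fun i => L j i ≠ 0)).Nonempty} := by
    intro j
    have hEq : {ω | (supp ω ∩ Finset.univ.filter (fun i => L j i ≠ 0)).Nonempty}
        = ⋃ i ∈ Finset.univ.filter (fun i => L j i ≠ 0), {ω | x ω i ≠ 0} := by
      ext ω
      simp only [Set.mem_setOf_eq, Set.mem_iUnion, Finset.Nonempty, Finset.mem_inter,
        Finset.mem_filter, Finset.mem_univ, true_and, hsupp]
      tauto
    rw [hEq]
    exact MeasurableSet.biUnion (Finset.countable_toSet _)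
      fun i _ => ((hxi i) (measurableSet_singleton 0)).compl
  -- key measure equality per row j
  have key : ∀ j : Fin m,
      volume {ω | L.mulVec (x ω) j ≠ 0} =
      volume {ω | (supp ω ∩ Finset.univ.filter (fun i => L j i ≠ 0)).Nonempty} := by
    intro j
    set A := {ω | L.mulVec (x ω) j ≠ 0} with hA_def
    set B := {ω | (supp ω ∩ Finset.univ.filter (fun i => L j i ≠ 0)).Nonempty} with hB_def
    have hAB : A ⊆ B := by
      intro ω hω
      by_contra hB
      apply hω
      have hzero : ∀ i, L j i * x ω i = 0 := by
        intro i
        by_cases hL : L j i = 0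
        · simp [hL]
        by_cases hxω : x ω i = 0
        · simp [hxω]
        exact absurd ⟨i, by simp [Finset.mem_inter, hsupp, hxω, hL]⟩ hB
      show L.mulVec (x ω) j = 0
      simp only [Matrix.mulVec, dotProduct]
      exact Finset.sum_eq_zero fun i _ => hzero i
    -- for a support S meeting N_j, the zero-sum event has measure 0
    have hC : ∀ S : Finset (Fin m), (∃ i ∈ S, L j i ≠ 0) →
        volume ({ω | supp ω = S} ∩ {ω | ∑ i ∈ S, L j i * x ω i = 0}) = 0 := by
      intro S hS
      by_cases h0 : volume {ω | supp ω = S} = 0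
      · exact measure_mono_null Set.inter_subset_left h0
      · have hcc := hcond0 S j h0 hS
        rw [cond_apply (hmS S)] at hcc
        rcases mul_eq_zero.mp hcc with h | h
        · exact absurd (ENNReal.inv_eq_zero.mp h) (measure_ne_top _ _)
        · exact h
    have hdiff : volume (B \ A) = 0 := by
      have hsub : B \ A ⊆ ⋃ S : Finset (Fin m),
          (B ∩ {ω | supp ω = S} ∩ {ω | ∑ i ∈ S, L j i * x ω i = 0}) := by
        intro ω hω
        obtain ⟨hB, hA⟩ := hω
        simp only [Set.mem_iUnion, Set.mem_inter_iff, Set.mem_setOf_eq]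
        refine ⟨supp ω, ⟨hB, rfl⟩, ?_⟩
        have hA' : L.mulVec (x ω) j = 0 := not_not.mp hA
        have : ∑ i ∈ supp ω, L j i * x ω i = ∑ i, L j i * x ω i := by
          apply Finset.sum_subset (Finset.subset_univ _)
          intro i _ hi
          have hxi0 : x ω i = 0 := by
            by_contra hne
            exact hi (by simp [hsupp, hne])
          simp [hxi0]
        rw [this]
        simpa [Matrix.mulVec, dotProduct] using hA'
      refine measure_mono_null hsub (measure_iUnion_null fun S => ?_)
      by_cases hS : ∃ i ∈ S, L j i ≠ 0
      · refine measure_mono_null (fun ω hω => ?_) (hC S hS)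
        exact ⟨hω.1.2, hω.2⟩
      · have hempty : B ∩ {ω | supp ω = S} = ∅ := by
          ext ω
          simp only [Set.mem_inter_iff, Set.mem_setOf_eq, Set.mem_empty_iff_false, iff_false,
            not_and]
          intro hBω hSω
          obtain ⟨i, hi⟩ := hBω
          rw [Finset.mem_inter, Finset.mem_filter] at hi
          exact hS ⟨i, hSω ▸ hi.1, hi.2.2⟩
        refine measure_mono_null (fun ω hω => ?_) (measure_empty (μ := volume))
        rw [← hempty]; exact hω.1
    have hBA : volume B ≤ volume A := by
      calc volume B ≤ volume (A ∪ (B \ A)) := by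
            refine measure_mono fun ω h => ?_
            by_cases hA : ω ∈ A
            · exact Or.inl hA
            · exact Or.inr ⟨h, hA⟩
        _ ≤ volume A + volume (B \ A) := measure_union_le _ _
        _ = volume A := by rw [hdiff, add_zero]
    exact le_antisymm (measure_mono hAB) hBA
  -- now convert integrals of indicator sums
  have hind : ∀ (p : Ω → Prop) [DecidablePred p],
      (fun ω => if p ω then (1 : ℝ) else 0) = Set.indicator {ω | p ω} (fun _ => 1) := by
    intro p _
    ext ω
    by_cases h : p ω <;> simp [Set.indicator_apply, h]
  have hint : ∀ (p : Ω → Prop) [DecidablePred p], MeasurableSet {ω | p ω} →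
      (∫ ω, (if p ω then (1 : ℝ) else 0)) = (volume {ω | p ω}).toReal := by
    intro p _ hC
    rw [hind p, integral_indicator hC]
    simp [measureReal_def]
  have hintg : ∀ (p : Ω → Prop) [DecidablePred p], MeasurableSet {ω | p ω} →
      Integrable (fun ω => if p ω then (1 : ℝ) else 0) := by
    intro p _ hC
    rw [hind p]
    exact (integrable_const (1 : ℝ)).indicator hC
  calc ∫ ω, (∑ j, if L.mulVec (x ω) j ≠ 0 then (1 : ℝ) else 0)
      = ∑ j, ∫ ω, (if L.mulVec (x ω) j ≠ 0 then (1 : ℝ) else 0) := by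
        exact integral_finset_sum _ fun j _ => hintg _ (hmA j)
    _ = ∑ j, ∫ ω, (if (supp ω ∩ Finset.univ.filter (fun i => L j i ≠ 0)).Nonempty
          then (1 : ℝ) else 0) := by
        refine Finset.sum_congr rfl fun j _ => ?_
        rw [hint _ (hmA j), hint _ (hmB j), key j]
    _ = ∫ ω, (∑ j : Fin m,
          if (supp ω ∩ Finset.univ.filter (fun i => L j i ≠ 0)).Nonempty
          then (1 : ℝ) else 0) := by
        exact (integral_finset_sum _ fun j _ => hintg _ (hmB j)).symm
end

section
/- (Sparsity lemma) Let L ∈ R^{m×m} be invertible and x an R^m-valued random vector with random support S having probability mass p(S) on a family 𝒮 of subsets of {1,...,m}. Assume: (i) for all j, the union of all S ∈ 𝒮 with j ∉ S equals {1,...,m}\{j}; (ii) for every S ∈ 𝒮 and every nonzero a ∈ R^{|S|}, P(aᵀ x_S = 0 | S) = 0. If E[‖Lx‖₀] ≤ E[‖x‖₀], then L = D·P for some invertible diagonal matrix D and permutation matrix P. -/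
open MeasureTheory ProbabilityTheory Matrix
open scoped Classical

namespace Stmt9Aux


variable {m : ℕ} (L : Matrix (Fin m) (Fin m) ℝ)

noncomputable def Rset (U : Finset (Fin m)) : Finset (Fin m) :=
  Finset.univ.filter (fun j => ∃ i ∈ U, L j i ≠ 0)

lemma mem_Rset {U : Finset (Fin m)} {j : Fin m} :
    j ∈ Rset L U ↔ ∃ i ∈ U, L j i ≠ 0 := by simp [Rset]

lemma Rset_union (U V : Finset (Fin m)) :
    Rset L (U ∪ V) = Rset L U ∪ Rset L V := by
  ext j
  simp only [mem_Rset, Finset.mem_union]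
  constructor
  · rintro ⟨i, hi | hi, h⟩
    · exact Or.inl ⟨i, hi, h⟩
    · exact Or.inr ⟨i, hi, h⟩
  · rintro (⟨i, hi, h⟩ | ⟨i, hi, h⟩) <;> exact ⟨i, by simp [hi], h⟩

lemma Rset_inter_subset (U V : Finset (Fin m)) :
    Rset L (U ∩ V) ⊆ Rset L U ∩ Rset L V := by
  intro j hj
  rw [mem_Rset] at hj
  obtain ⟨i, hi, h⟩ := hj
  rw [Finset.mem_inter] at hi
  rw [Finset.mem_inter, mem_Rset, mem_Rset]
  exact ⟨⟨i, hi.1, h⟩, ⟨i, hi.2, h⟩⟩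

lemma lemA (hinj : Function.Injective L.mulVec) (U : Finset (Fin m)) :
    U.card ≤ (Rset L U).card := by
  classical
  set R := Rset L U with hR
  -- linear map from (U → ℝ) to (R → ℝ)
  let M : Matrix R U ℝ := Matrix.of fun j i => L j i
  have hMinj : Function.Injective M.mulVec := by
    intro c d hcd
    have key : ∀ c : ↥U → ℝ, M.mulVec c = 0 → c = 0 := by
      intro c hc
      set c' : Fin m → ℝ := fun i => if h : i ∈ U then c ⟨i, h⟩ else 0 with hc'
      have hsum : ∀ j : Fin m, L.mulVec c' j = ∑ i ∈ U.attach, L j i * c i := by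
        intro j
        have : L.mulVec c' j = ∑ i, L j i * c' i := by
          simp [Matrix.mulVec, dotProduct]
        rw [this]
        rw [← Finset.sum_subset (Finset.subset_univ U)
          (by intro i _ hi; simp [hc', dif_neg hi])]
        rw [← Finset.sum_attach U (fun i => L j i * c' i)]
        refine Finset.sum_congr rfl fun i _ => ?_
        simp [hc', dif_pos i.2]
      have hL0 : L.mulVec c' = 0 := by
        funext j
        rw [hsum j]
        by_cases hj : j ∈ R
        · have := congrFun hc ⟨j, hj⟩
          simpa [M, Matrix.mulVec, dotProduct] using this
        · rw [hR, mem_Rset] at hj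
          push_neg at hj
          refine Finset.sum_eq_zero fun i _ => ?_
          rw [hj i i.2, zero_mul]
      have : c' = 0 := hinj (by rw [hL0]; simp [Matrix.mulVec_zero])
      funext i
      have := congrFun this i
      simpa [hc', dif_pos i.2] using this
    have h0 : M.mulVec (c - d) = 0 := by
      rw [Matrix.mulVec_sub, hcd, sub_self]
    have := key _ h0
    exact sub_eq_zero.mp this
  have hfr := LinearMap.finrank_le_finrank_of_injective
    (f := M.mulVecLin) (by simpa [Matrix.coe_mulVecLin] using hMinj)
  simpa [Module.finrank_pi] using hfr

-- closure of "good" under intersection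
lemma inter_good (hA : ∀ U : Finset (Fin m), U.card ≤ (Rset L U).card)
    {U V : Finset (Fin m)} (hU : (Rset L U).card ≤ U.card)
    (hV : (Rset L V).card ≤ V.card) :
    (Rset L (U ∩ V)).card ≤ (U ∩ V).card := by
  have h1 := Finset.card_union_add_card_inter (Rset L U) (Rset L V)
  have h2 := Finset.card_union_add_card_inter U V
  have h3 : (U ∪ V).card ≤ (Rset L (U ∪ V)).card := hA _
  rw [Rset_union] at h3
  have h4 : (Rset L (U ∩ V)).card ≤ (Rset L U ∩ Rset L V).card :=
    Finset.card_le_card (Rset_inter_subset L U V)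
  omega


lemma inf_good
 (hA : ∀ U : Finset (Fin m), U.card ≤ (Rset L U).card)
    {ι : Type*} (F : ι → Finset (Fin m)) (K : Finset ι)
    (hF : ∀ k ∈ K, (Rset L (F k)).card ≤ (F k).card) :
    (Rset L (K.inf F)).card ≤ (K.inf F).card := by
  classical
  induction K using Finset.induction_on with
  | empty =>
    rw [Finset.inf_empty, Finset.top_eq_univ]
    calc (Rset L Finset.univ).card ≤ Finset.univ.card := Finset.card_le_univ _
    _ = _ := rfl
  | @insert a s ha ih =>
    rw [Finset.inf_insert, Finset.inf_eq_inter]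
    exact inter_good L hA (hF a (Finset.mem_insert_self a s))
      (ih fun k hk => hF k (Finset.mem_insert_of_mem hk))

lemma singleton_good (hA : ∀ U : Finset (Fin m), U.card ≤ (Rset L U).card)
    (𝒮 : Set (Finset (Fin m)))
    (hgood : ∀ S ∈ 𝒮, (Rset L S).card ≤ S.card)
    (hcov : ∀ i k : Fin m, i ≠ k → ∃ S ∈ 𝒮, i ∈ S ∧ k ∉ S)
    (i : Fin m) : (Rset L {i}).card = 1 := by
  classical
  have hch : ∀ k : Fin m, ∃ F : Finset (Fin m),
      (Rset L F).card ≤ F.card ∧ i ∈ F ∧ (k ≠ i → k ∉ F) := by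
    intro k
    by_cases hk : k = i
    · exact ⟨Finset.univ, le_of_le_of_eq (Finset.card_le_univ _) rfl,
        Finset.mem_univ i, fun h => absurd hk h⟩
    · obtain ⟨S, hS, hiS, hkS⟩ := hcov i k (Ne.symm hk)
      exact ⟨S, hgood S hS, hiS, fun _ => hkS⟩
  choose F hF1 hF2 hF3 using hch
  set T := Finset.univ.inf F with hT
  have hTgood : (Rset L T).card ≤ T.card :=
    inf_good L hA F Finset.univ (fun k _ => hF1 k)
  have hiT : i ∈ T := by
    have : ({i} : Finset (Fin m)) ≤ T :=
      Finset.le_inf fun k _ => Finset.singleton_subset_iff.mpr (hF2 k)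
    exact Finset.singleton_subset_iff.mp this
  have hTi : T = {i} := by
    apply Finset.Subset.antisymm
    · intro a ha
      rw [Finset.mem_singleton]
      by_contra hne
      exact hF3 a hne (Finset.le_iff_subset.mp (Finset.inf_le (Finset.mem_univ a)) ha)
    · exact Finset.singleton_subset_iff.mpr hiT
  have h1 := hA {i}
  rw [hTi] at hTgood
  simp only [Finset.card_singleton] at h1 hTgood
  omega

theorem combi (hL : IsUnit L)
    (𝒮 : Set (Finset (Fin m)))
    (hgood : ∀ S ∈ 𝒮, (Rset L S).card ≤ S.card)
    (hcov : ∀ i k : Fin m, i ≠ k → ∃ S ∈ 𝒮, i ∈ S ∧ k ∉ S) :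
    ∃ (D : Matrix (Fin m) (Fin m) ℝ) (σ : Equiv.Perm (Fin m)),
      D.IsDiag ∧ IsUnit D ∧ L = D * σ.permMatrix ℝ := by
  classical
  have hinj : Function.Injective L.mulVec := (Matrix.mulVec_injective_iff_isUnit).mpr hL
  have hA := lemA L hinj
  have hsing : ∀ i, ∃ j, Rset L {i} = {j} := fun i =>
    Finset.card_eq_one.mp (singleton_good L hA 𝒮 hgood hcov i)
  choose f hf using hsing
  have hiff : ∀ j i, L j i ≠ 0 ↔ j = f i := by
    intro j i
    have : j ∈ Rset L {i} ↔ L j i ≠ 0 := by simp [mem_Rset]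
    rw [← this, hf i, Finset.mem_singleton]
  have hfinj : Function.Injective f := by
    intro a b hab
    by_contra hne
    have h2 : ({a, b} : Finset (Fin m)).card ≤ (Rset L ({a, b})).card := hA _
    have hcard : ({a, b} : Finset (Fin m)).card = 2 := Finset.card_pair hne
    have hun : Rset L ({a, b} : Finset (Fin m)) ⊆ {f a} := by
      intro j hj
      rw [mem_Rset] at hj
      obtain ⟨i, hi, h⟩ := hj
      rw [Finset.mem_insert, Finset.mem_singleton] at hi
      rw [Finset.mem_singleton]
      rcases hi with rfl | rfl
      · exact (hiff j i).mp h
      · rw [(hiff j i).mp h, ← hab]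
    have := Finset.card_le_card hun
    simp only [Finset.card_singleton] at this
    omega
  let σ : Equiv.Perm (Fin m) := Equiv.ofBijective f (Finite.injective_iff_bijective.mp hfinj)
  have hσ : ∀ i, σ i = f i := fun i => rfl
  refine ⟨Matrix.diagonal (fun j => L j (σ.symm j)), σ.symm,
    Matrix.isDiag_diagonal _, ?_, ?_⟩
  · rw [Matrix.isUnit_diagonal]
    have hne : ∀ j, L j (σ.symm j) ≠ 0 := by
      intro j
      rw [hiff, ← hσ, Equiv.apply_symm_apply]
    refine IsUnit.of_mul_eq_one (fun j => (L j (σ.symm j))⁻¹) ?_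
    funext j
    exact mul_inv_cancel₀ (hne j)
  · ext j i
    rw [Matrix.diagonal_mul]
    have h2 : (Equiv.Perm.permMatrix ℝ σ.symm) j i = if i = σ.symm j then (1:ℝ) else 0 := by
      simp [Equiv.Perm.permMatrix, PEquiv.toMatrix_apply, Equiv.toPEquiv_apply, eq_comm]
    rw [h2]
    by_cases h : i = σ.symm j
    · rw [if_pos h, mul_one, h]
    · rw [if_neg h, mul_zero]
      by_contra hne
      exact h (by rw [(hiff j i).mp hne, ← hσ, Equiv.symm_apply_apply])

end Stmt9Aux

open Stmt9Aux

theorem stmt9 {m : ℕ} {Ω : Type*} [MeasureSpace Ω]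
    [IsProbabilityMeasure (volume : Measure Ω)]
    (x : Ω → Fin m → ℝ) (hx : Measurable x)
    (L : Matrix (Fin m) (Fin m) ℝ) (hL : IsUnit L)
    -- the random support of x
    (supp : Ω → Finset (Fin m))
    (hsupp : ∀ ω, supp ω = Finset.univ.filter (fun j => x ω j ≠ 0))
    -- 𝒮 is the family of supports with positive probability
    (𝒮 : Set (Finset (Fin m)))
    (h𝒮 : 𝒮 = {S | volume {ω | supp ω = S} ≠ 0})
    -- (i) sufficient support variability
    (hvar : ∀ j : Fin m, (⋃ S ∈ {S ∈ 𝒮 | j ∉ S}, (S : Set (Fin m))) =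
      Set.univ \ {j})
    -- (ii) conditionally, x_S puts no mass on proper hyperplanes
    (hdens : ∀ S ∈ 𝒮, ∀ a : Fin m → ℝ, (∃ i ∈ S, a i ≠ 0) →
      (volume[|{ω | supp ω = S}]) {ω | ∑ i ∈ S, a i * x ω i = 0} = 0)
    -- sparsity inequality
    (hineq : ∫ ω, (∑ j, if L.mulVec (x ω) j ≠ 0 then (1 : ℝ) else 0) ≤
      ∫ ω, (∑ j, if x ω j ≠ 0 then (1 : ℝ) else 0)) :
    ∃ (D : Matrix (Fin m) (Fin m) ℝ) (σ : Equiv.Perm (Fin m)),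
      D.IsDiag ∧ IsUnit D ∧ L = D * σ.permMatrix ℝ := by
  classical
  set μ : Measure Ω := volume with hμ
  have hxj : ∀ j : Fin m, Measurable fun ω => x ω j :=
    fun j => (measurable_pi_apply j).comp hx
  set A : Finset (Fin m) → Set Ω := fun S => {ω | supp ω = S} with hA
  -- membership characterization
  have hmemsupp : ∀ ω j, j ∈ supp ω ↔ x ω j ≠ 0 := by
    intro ω j; rw [hsupp]; simp
  have hAmeas : ∀ S, MeasurableSet (A S) := by
    intro S
    have : A S = ⋂ j : Fin m, {ω | (x ω j ≠ 0) ↔ (j ∈ S)} := by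
      ext ω
      simp only [hA, Set.mem_setOf_eq, Set.mem_iInter]
      constructor
      · intro h j; rw [← h, hmemsupp]
      · intro h
        ext j
        rw [hmemsupp, h j]
    rw [this]
    refine MeasurableSet.iInter fun j => ?_
    by_cases hj : j ∈ S
    · simp only [hj, iff_true]
      exact ((hxj j) (measurableSet_singleton 0)).compl
    · simp only [hj, iff_false, not_not]
      exact (hxj j) (measurableSet_singleton 0)
  set f : Ω → ℝ := fun ω => ∑ j, if x ω j ≠ 0 then (1 : ℝ) else 0 with hf
  set g : Ω → ℝ := fun ω => ∑ j, if L.mulVec (x ω) j ≠ 0 then (1 : ℝ) else 0 with hg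
  -- integrability
  have hfint : Integrable f μ := by
    refine integrable_finset_sum _ fun j _ => ?_
    have : (fun ω => if x ω j ≠ 0 then (1:ℝ) else 0) =
        Set.indicator {ω | x ω j ≠ 0} (fun _ => (1:ℝ)) := by
      funext ω; by_cases h : x ω j ≠ 0 <;> simp [Set.indicator, h]
    rw [this]
    exact (integrable_const (1:ℝ)).indicator ((hxj j) (measurableSet_singleton 0)).compl
  have hgmeas_j : ∀ j : Fin m, Measurable fun ω => L.mulVec (x ω) j := by
    intro j
    have : (fun ω => L.mulVec (x ω) j) = fun ω => ∑ i, L j i * x ω i := by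
      funext ω; simp [Matrix.mulVec, dotProduct]
    rw [this]
    exact Finset.measurable_sum _ fun i _ => (measurable_const.mul (hxj i))
  have hgint : Integrable g μ := by
    refine integrable_finset_sum _ fun j _ => ?_
    have : (fun ω => if L.mulVec (x ω) j ≠ 0 then (1:ℝ) else 0) =
        Set.indicator {ω | L.mulVec (x ω) j ≠ 0} (fun _ => (1:ℝ)) := by
      funext ω; by_cases h : L.mulVec (x ω) j ≠ 0 <;> simp [Set.indicator, h]
    rw [this]
    exact (integrable_const (1:ℝ)).indicator
      (((hgmeas_j j) (measurableSet_singleton 0)).compl)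
  -- pointwise value of f
  have hfval : ∀ ω, f ω = ((supp ω).card : ℝ) := by
    intro ω
    show (∑ j, if x ω j ≠ 0 then (1:ℝ) else 0) = _
    rw [Finset.sum_boole, hsupp]
  -- decomposition of integrals over the partition {A S}
  have hdecomp : ∀ (h : Ω → ℝ), Integrable h μ →
      ∫ ω, h ω ∂μ = ∑ S : Finset (Fin m), ∫ ω in A S, h ω ∂μ := by
    intro h hint
    have hpt : ∀ ω, h ω = ∑ S : Finset (Fin m), (A S).indicator h ω := by
      intro ω
      rw [Finset.sum_congr rfl (fun S _ => by
        simp only [Set.indicator, hA, Set.mem_setOf_eq] : ∀ S ∈ Finset.univ,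
        (A S).indicator h ω = if supp ω = S then h ω else 0)]
      rw [Finset.sum_ite_eq Finset.univ (supp ω) (fun _ => h ω)]
      simp
    calc ∫ ω, h ω ∂μ = ∫ ω, ∑ S : Finset (Fin m), (A S).indicator h ω ∂μ := by
          exact integral_congr_ae (Filter.Eventually.of_forall hpt)
    _ = ∑ S : Finset (Fin m), ∫ ω, (A S).indicator h ω ∂μ :=
          integral_finset_sum _ fun S _ => hint.indicator (hAmeas S)
    _ = ∑ S : Finset (Fin m), ∫ ω in A S, h ω ∂μ :=
          Finset.sum_congr rfl fun S _ => integral_indicator (hAmeas S)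
  -- value of ∫ f over each piece
  have hfpiece : ∀ S : Finset (Fin m),
      ∫ ω in A S, f ω ∂μ = (μ (A S)).toReal * (S.card : ℝ) := by
    intro S
    rw [setIntegral_congr_ae (hAmeas S) (g := fun _ => (S.card : ℝ))
      (Filter.Eventually.of_forall fun ω hω => by
        rw [hfval ω]; exact congrArg _ (congrArg _ hω))]
    rw [setIntegral_const]
    simp [smul_eq_mul, measureReal_def]
  -- value of ∫ g over each piece
  have hgpiece : ∀ S : Finset (Fin m),
      ∫ ω in A S, g ω ∂μ = (μ (A S)).toReal * ((Rset L S).card : ℝ) := by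
    intro S
    -- the bad set
    set B : Set Ω := ⋃ j : Fin m, ⋃ (_ : j ∈ Rset L S),
      (A S ∩ {ω | ∑ i ∈ S, L j i * x ω i = 0}) with hB
    have hBnull : μ B = 0 := by
      refine measure_iUnion_null fun j => measure_iUnion_null fun hj => ?_
      by_cases hAS : μ (A S) = 0
      · exact measure_mono_null Set.inter_subset_left hAS
      · have hS𝒮 : S ∈ 𝒮 := by rw [h𝒮]; exact hAS
        obtain ⟨i, hiS, hLji⟩ := (mem_Rset L).mp hj
        have hcond := hdens S hS𝒮 (fun i => L j i) ⟨i, hiS, hLji⟩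
        rw [cond_apply (hAmeas S)] at hcond
        rcases mul_eq_zero.mp hcond with h0 | h0
        · exact absurd (ENNReal.inv_eq_zero.mp h0) (measure_ne_top μ _)
        · exact h0
    have hae : ∀ᵐ ω ∂μ, ω ∈ A S → g ω = ((Rset L S).card : ℝ) := by
      have : ∀ᵐ ω ∂μ, ω ∉ B := by
        rw [MeasureTheory.ae_iff]
        simpa using hBnull
      filter_upwards [this] with ω hωB hωA
      have hsub : ∀ j : Fin m, L.mulVec (x ω) j = ∑ i ∈ S, L j i * x ω i := by
        intro j
        have h1 : L.mulVec (x ω) j = ∑ i, L j i * x ω i := by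
          simp [Matrix.mulVec, dotProduct]
        rw [h1]
        symm
        refine Finset.sum_subset (Finset.subset_univ S) fun i _ hi => ?_
        have : x ω i = 0 := by
          by_contra hxi
          exact hi (by rw [← hωA, hmemsupp]; exact hxi)
        rw [this, mul_zero]
      have hval : ∀ j : Fin m, (L.mulVec (x ω) j ≠ 0) ↔ j ∈ Rset L S := by
        intro j
        constructor
        · intro hne
          rw [mem_Rset]
          by_contra hc
          push_neg at hc
          refine hne ?_
          rw [hsub j]
          exact Finset.sum_eq_zero fun i hi => by rw [hc i hi, zero_mul]
        · intro hj
          intro hcontra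
          refine hωB ?_
          rw [hB]
          refine Set.mem_iUnion.mpr ⟨j, Set.mem_iUnion.mpr ⟨hj, hωA, ?_⟩⟩
          rw [Set.mem_setOf_eq, ← hsub j]
          exact hcontra
      show (∑ j, if L.mulVec (x ω) j ≠ 0 then (1:ℝ) else 0) = _
      have : ∀ j : Fin m, (if L.mulVec (x ω) j ≠ 0 then (1:ℝ) else 0) =
          (if j ∈ Rset L S then (1:ℝ) else 0) := by
        intro j
        by_cases h : j ∈ Rset L S
        · rw [if_pos h, if_pos ((hval j).mpr h)]
        · rw [if_neg h, if_neg (fun hc => h ((hval j).mp hc))]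
      rw [Finset.sum_congr rfl fun j _ => this j, Finset.sum_boole]
      congr 1
      simp
    rw [setIntegral_congr_ae (hAmeas S) hae, setIntegral_const]
    simp [smul_eq_mul, measureReal_def]
  -- the inequality per piece
  have hinj : Function.Injective L.mulVec := (Matrix.mulVec_injective_iff_isUnit).mpr hL
  have hAle := lemA L hinj
  have hsum_le : ∑ S : Finset (Fin m), (μ (A S)).toReal * ((Rset L S).card : ℝ) ≤
      ∑ S : Finset (Fin m), (μ (A S)).toReal * (S.card : ℝ) := by
    rw [← Finset.sum_congr rfl fun S _ => hgpiece S,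
        ← Finset.sum_congr rfl fun S _ => hfpiece S,
        ← hdecomp g hgint, ← hdecomp f hfint]
    exact hineq
  have hterm : ∀ S : Finset (Fin m),
      (μ (A S)).toReal * ((Rset L S).card : ℝ) - (μ (A S)).toReal * (S.card : ℝ) = 0 := by
    have hnn : ∀ S ∈ (Finset.univ : Finset (Finset (Fin m))),
        0 ≤ (μ (A S)).toReal * ((Rset L S).card : ℝ) - (μ (A S)).toReal * (S.card : ℝ) := by
      intro S _
      have := hAle S
      have h1 : (S.card : ℝ) ≤ ((Rset L S).card : ℝ) := by exact_mod_cast this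
      nlinarith [ENNReal.toReal_nonneg (a := μ (A S))]
    have hsum0 : ∑ S : Finset (Fin m),
        ((μ (A S)).toReal * ((Rset L S).card : ℝ) - (μ (A S)).toReal * (S.card : ℝ)) = 0 := by
      have hle : ∑ S : Finset (Fin m),
          ((μ (A S)).toReal * ((Rset L S).card : ℝ) - (μ (A S)).toReal * (S.card : ℝ)) ≤ 0 := by
        rw [Finset.sum_sub_distrib]
        linarith [hsum_le]
      have hge := Finset.sum_nonneg hnn
      linarith
    intro S
    exact (Finset.sum_eq_zero_iff_of_nonneg hnn).mp hsum0 S (Finset.mem_univ S)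
  -- conclude card equality on 𝒮
  have hgood : ∀ S ∈ 𝒮, (Rset L S).card ≤ S.card := by
    intro S hS
    rw [h𝒮] at hS
    have hpos : (μ (A S)).toReal ≠ 0 := by
      simp only [ENNReal.toReal_ne_zero]
      exact ⟨hS, measure_ne_top μ _⟩
    have := hterm S
    have h2 : (μ (A S)).toReal * (((Rset L S).card : ℝ) - (S.card : ℝ)) = 0 := by ring_nf; linarith [this]
    rcases mul_eq_zero.mp h2 with h | h
    · exact absurd h hpos
    · have : ((Rset L S).card : ℝ) = (S.card : ℝ) := by linarith
      exact le_of_eq (by exact_mod_cast this)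
  -- coverage
  have hcov : ∀ i k : Fin m, i ≠ k → ∃ S ∈ 𝒮, i ∈ S ∧ k ∉ S := by
    intro i k hik
    have : (i : Fin m) ∈ Set.univ \ ({k} : Set (Fin m)) := ⟨Set.mem_univ i, by simpa using hik⟩
    rw [← hvar k] at this
    obtain ⟨s, hs⟩ := Set.mem_iUnion.mp this
    obtain ⟨hs2, hs3⟩ := Set.mem_iUnion.mp hs
    obtain ⟨hS𝒮, hkS⟩ := hs2
    exact ⟨s, hS𝒮, by exact_mod_cast hs3, hkS⟩
  exact combi L hL 𝒮 hgood hcov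
end
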